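/- arXiv:1603.04964 — 2 statements merged into one kernel-verified Lean document; each statement's English description precedes it below -/
import Mathlib

section
/- Suppose κ satisfies Assumption 1 and Hypothesis (H) holds. Then there exists a compact subset K of S^(N−k+1) (with the product metric) such that for every x̂_{k:N} ∈ S^(N−k+1), inf over ŷ_{k:N} ∈ K of G(ŷ_{k:N}) is at most G(x̂_{k:N}); in particular, if G attains a global minimum, a minimizer can be found in K. -/
open MeasureTheory Filter
open scoped ENNReal NNReal Topology

noncomputable section

/-- The state space `S = ℝ² × [0, 2π)`. -/
abbrev S : Type := {x : ℝ × ℝ × ℝ // x.2.2 ∈ Set.Ico (0 : ℝ) (2 * Real.pi)}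

/-- The metric `d` on `S`. -/
noncomputable def dS (x y : S) : ℝ :=
  Real.sqrt ((x.1.1 - y.1.1) ^ 2 + (x.1.2.1 - y.1.2.1) ^ 2
    + 2 * (Real.cos x.1.2.2 - Real.cos y.1.2.2) ^ 2
    + 2 * (Real.sin x.1.2.2 - Real.sin y.1.2.2) ^ 2)

/-- The initial state `x₀ = (0,0,0)`. -/
def origin : S := ⟨(0, 0, 0), ⟨le_rfl, by positivity⟩⟩

/-- `κ` is a Markov kernel on `S`. -/
def IsMarkov (κ : S → Measure S) : Prop :=
  (∀ x, IsProbabilityMeasure (κ x)) ∧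
    ∀ A : Set S, MeasurableSet A → Measurable fun x => κ x A

/-- Continuity of a real-valued function with respect to the metric `dS`. -/
def DContinuous (g : S → ℝ) : Prop :=
  ∀ x : S, ∀ ε : ℝ, 0 < ε → ∃ δ : ℝ, 0 < δ ∧ ∀ y : S, dS x y < δ → |g y - g x| < ε

/-- Openness with respect to the metric `dS`. -/
def DOpen (O : Set S) : Prop :=
  ∀ x ∈ O, ∃ δ : ℝ, 0 < δ ∧ ∀ y : S, dS x y < δ → y ∈ O

/-- Assumption 1 on the kernel `κ`. -/
def Assumption1 (κ : S → Measure S) : Prop :=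
  (∀ A : Set S, MeasurableSet A → DContinuous fun x => (κ x A).toReal) ∧
    ∀ O : Set S, DOpen O → O.Nonempty → ∀ x : S, 0 < κ x O

/-- Auxiliary downward value recursion; the first argument is the number
`N + 1 - j` of remaining stages. -/
noncomputable def Jaux (κ : S → Measure S) (c' : ℕ → ℝ) (xhat : ℕ → S) :
    ℕ → ℕ → S → ℝ≥0∞
  | 0, _, _ => 0
  | m + 1, j, x =>
      min (ENNReal.ofReal (dS x (xhat j) ^ 2) + ∫⁻ y, Jaux κ c' xhat m (j + 1) y ∂(κ x))
        (ENNReal.ofReal (c' j))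

/-- The optimal cost-to-go `J*_j(x, x̂_{j:N})`. -/
noncomputable def JJ (κ : S → Measure S) (c' : ℕ → ℝ) (N : ℕ) (xhat : ℕ → S)
    (j : ℕ) (x : S) : ℝ≥0∞ :=
  Jaux κ c' xhat (N + 1 - j) j x

/-- `G_j(x, x̂_{j:N}) = ∫ J*_j(y, x̂_{j:N}) κ(x)(dy)`. -/
noncomputable def Gj (κ : S → Measure S) (c' : ℕ → ℝ) (N : ℕ) (xhat : ℕ → S)
    (j : ℕ) (x : S) : ℝ≥0∞ :=
  ∫⁻ y, JJ κ c' N xhat j y ∂(κ x)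

/-- `G(x̂_{k:N}) = G_k(x₀, x̂_{k:N})`. -/
noncomputable def Gtot (κ : S → Measure S) (c' : ℕ → ℝ) (k N : ℕ) (xhat : ℕ → S) : ℝ≥0∞ :=
  Gj κ c' N xhat k origin

/-- A randomized policy: a tuple of Borel measurable functions `f_j : S → [0,1]`. -/
def IsPolicy (k N : ℕ) (f : ℕ → S → ℝ≥0∞) : Prop :=
  ∀ j, k ≤ j → j ≤ N → Measurable (f j) ∧ ∀ x, f j x ≤ 1

/-- Auxiliary cost-to-go recursion for a policy; first argument is `N + 1 - j`. -/
noncomputable def Vaux (κ : S → Measure S) (c' : ℕ → ℝ) (xhat : ℕ → S)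
    (f : ℕ → S → ℝ≥0∞) : ℕ → ℕ → S → ℝ≥0∞
  | 0, _, _ => 0
  | m + 1, j, x =>
      f j x * (ENNReal.ofReal (dS x (xhat j) ^ 2) + ∫⁻ y, Vaux κ c' xhat f m (j + 1) y ∂(κ x))
        + (1 - f j x) * ENNReal.ofReal (c' j)

/-- The cost-to-go `V_j` of a policy `f` with estimates `x̂`. -/
noncomputable def VV (κ : S → Measure S) (c' : ℕ → ℝ) (N : ℕ) (xhat : ℕ → S)
    (f : ℕ → S → ℝ≥0∞) (j : ℕ) (x : S) : ℝ≥0∞ :=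
  Vaux κ c' xhat f (N + 1 - j) j x

/-- The total expected cost `C(f_{k:N}, x̂_{k:N})`. -/
noncomputable def Cost (κ : S → Measure S) (c' : ℕ → ℝ) (k N : ℕ) (xhat : ℕ → S)
    (f : ℕ → S → ℝ≥0∞) : ℝ≥0∞ :=
  ∫⁻ y, VV κ c' N xhat f k y ∂(κ origin)

/-- `f ∈ 𝔓(x̂_{k:N})`: `f` minimizes the cost over all randomized policies. -/
def inP (κ : S → Measure S) (c' : ℕ → ℝ) (k N : ℕ) (xhat : ℕ → S)
    (f : ℕ → S → ℝ≥0∞) : Prop :=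
  IsPolicy k N f ∧
    ∀ g : ℕ → S → ℝ≥0∞, IsPolicy k N g → Cost κ c' k N xhat f ≤ Cost κ c' k N xhat g

/-- `x̂ ∈ 𝔛(f_{k:N})`: the estimates minimize the cost for the policy `f`. -/
def inX (κ : S → Measure S) (c' : ℕ → ℝ) (k N : ℕ) (f : ℕ → S → ℝ≥0∞)
    (xhat : ℕ → S) : Prop :=
  ∀ yhat : ℕ → S, Cost κ c' k N xhat f ≤ Cost κ c' k N yhat f

/-- Conditioning a measure on "no transmission" at stage `j`. -/
noncomputable def condMeas (f : ℕ → S → ℝ≥0∞) (j : ℕ) (μ : Measure S) : Measure S :=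
  (∫⁻ x, f j x ∂μ)⁻¹ • μ.withDensity (f j)

/-- The predicted measures `μ_{j|j−1}`, by recursion on `j - k`. -/
noncomputable def mupredAux (κ : S → Measure S) (f : ℕ → S → ℝ≥0∞) (k : ℕ) :
    ℕ → Measure S
  | 0 => κ origin
  | n + 1 => (condMeas f (k + n) (mupredAux κ f k n)).bind κ

/-- `μ_{j|j−1}`. -/
noncomputable def mupred (κ : S → Measure S) (f : ℕ → S → ℝ≥0∞) (k j : ℕ) : Measure S :=
  mupredAux κ f k (j - k)

/-- `q_j = ∫ f_j dμ_{j|j−1}`. -/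
noncomputable def qq (κ : S → Measure S) (f : ℕ → S → ℝ≥0∞) (k j : ℕ) : ℝ≥0∞ :=
  ∫⁻ x, f j x ∂(mupred κ f k j)

/-- `μ_{j|j}`. -/
noncomputable def mucond (κ : S → Measure S) (f : ℕ → S → ℝ≥0∞) (k j : ℕ) : Measure S :=
  condMeas f j (mupred κ f k j)

/-- Non-degeneracy of a policy. -/
def NonDeg (κ : S → Measure S) (f : ℕ → S → ℝ≥0∞) (k N : ℕ) : Prop :=
  ∀ j, k ≤ j → j ≤ N → 0 < qq κ f k j

/-- The closed "no transmission" region `D̄_j`. -/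
noncomputable def Dbar (κ : S → Measure S) (c' : ℕ → ℝ) (N : ℕ) (xhat : ℕ → S)
    (j : ℕ) : Set S :=
  {x : S | ENNReal.ofReal (dS x (xhat j) ^ 2) + ∫⁻ y, JJ κ c' N xhat (j + 1) y ∂(κ x)
      ≤ ENNReal.ofReal (c' j)}

/-- The open "no transmission" region `Ḏ_j`. -/
noncomputable def Dund (κ : S → Measure S) (c' : ℕ → ℝ) (N : ℕ) (xhat : ℕ → S)
    (j : ℕ) : Set S :=
  {x : S | ENNReal.ofReal (dS x (xhat j) ^ 2) + ∫⁻ y, JJ κ c' N xhat (j + 1) y ∂(κ x)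
      < ENNReal.ofReal (c' j)}

/-- Hypothesis (H). -/
def HypH (κ : S → Measure S) (c' : ℕ → ℝ) (k N : ℕ) : Prop :=
  ∀ j, k ≤ j → j ≤ N → ∃ xhat : ℕ → S, (Dund κ c' N xhat j).Nonempty

/-- Weak convergence of measures on `(S, dS)`: tested against `dS`-continuous
bounded functions. -/
def WeakConvS (μl : ℕ → Measure S) (μ : Measure S) : Prop :=
  ∀ h : S → ℝ, DContinuous h → (∃ C : ℝ, ∀ x, |h x| ≤ C) →
    Tendsto (fun l => ∫ x, h x ∂(μl l)) atTop (𝓝 (∫ x, h x ∂μ))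

/-- Convergence of a sequence of (non-degenerate) policies to a policy. -/
def PolConv (κ : S → Measure S) (k N : ℕ) (g : ℕ → ℕ → S → ℝ≥0∞)
    (f : ℕ → S → ℝ≥0∞) : Prop :=
  ∀ j, k ≤ j → j ≤ N →
    WeakConvS (fun l => mucond κ (g l) k j) (mucond κ f k j) ∧
      Tendsto (fun l => qq κ (g l) k j) atTop (𝓝 (qq κ f k j))

/-!
Take a minimizing sequence of estimate tuples and pass to a subsequence along which, at every
stage, the estimates either converge or escape to infinity. Let `j` be the first escaping stage
and reset the estimates from stage `j` on to fixed ones. Outside the set where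
`d(x, x̂_j)² < c'_j` the optimal cost-to-go at stage `j` already equals `c'_j`, so the reset costs
at most `c'_j` times the probability that the state at stage `j` lies in that set. This set
escapes to infinity with `x̂_j`, so by tightness of the law of the state at stage `j` the
probability tends to zero. Hence the reset tuples are still minimizing, and they converge;
together with their limit they form the compact set.
-/

open Set Real

section StepProb

variable {α : Type*} [MeasurableSpace α] {κ : α → Measure α}

/-- The probability that the chain with transitions `κ` started at `x` is in `B` after `n` steps. -/
def stepProb (κ : α → Measure α) (B : Set α) : ℕ → α → ℝ≥0∞
  | 0 => B.indicator 1
  | n + 1 => fun x => ∫⁻ y, stepProb κ B n y ∂(κ x)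

theorem measurable_stepProb (hκ : Measurable κ) {B : Set α} (hB : MeasurableSet B) :
    ∀ n, Measurable (stepProb κ B n)
  | 0 => measurable_const.indicator hB
  | n + 1 => (Measure.measurable_lintegral (measurable_stepProb hκ hB n)).comp hκ

theorem lintegral_stepProb (hκ : Measurable κ) {B : Set α} (hB : MeasurableSet B) :
    ∀ (n : ℕ) (μ : Measure α),
      ∫⁻ x, stepProb κ B n x ∂μ = ((fun ν : Measure α => ν.bind κ)^[n] μ) B
  | 0, μ => lintegral_indicator_one hB
  | n + 1, μ => by
    rw [Function.iterate_succ_apply, ← lintegral_stepProb hκ hB n,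
      Measure.lintegral_bind hκ.aemeasurable (measurable_stepProb hκ hB n).aemeasurable]
    rfl

theorem isProbabilityMeasure_iterate_bind (hκ : Measurable κ)
    (hprob : ∀ x, IsProbabilityMeasure (κ x)) :
    ∀ (n : ℕ) (μ : Measure α) [IsProbabilityMeasure μ],
      IsProbabilityMeasure ((fun ν : Measure α => ν.bind κ)^[n] μ)
  | 0, _, _ => ‹_›
  | n + 1, μ, _ => by
    have := isProbabilityMeasure_bind hκ.aemeasurable (m := μ) (ae_of_all _ hprob)
    exact isProbabilityMeasure_iterate_bind hκ hprob n (μ.bind κ)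

end StepProb

theorem tendsto_measure_setOf_le_atTop {α : Type*} [MeasurableSpace α] (ν : Measure α)
    [IsFiniteMeasure ν] {f : α → ℝ} (hf : Measurable f) :
    Tendsto (fun r : ℝ => ν {x | r ≤ f x}) atTop (𝓝 0) := by
  have hempty : ⋂ r : ℝ, {x | r ≤ f x} = ∅ :=
    eq_empty_of_forall_notMem fun x hx => absurd (mem_iInter.1 hx (f x + 1)) (by simp)
  have hanti : Antitone fun r : ℝ => {x | r ≤ f x} := fun r s hrs x hx => hrs.trans hx
  simpa [Function.comp_def, hempty] using
    tendsto_measure_iInter_atTop (μ := ν)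
      (fun r => (measurableSet_le measurable_const hf).nullMeasurableSet) hanti
      ⟨0, measure_ne_top ν _⟩

theorem exists_strictMono_forall_finset {β ι : Type*} (P : (ℕ → β) → Prop)
    (hP : ∀ a (φ : ℕ → ℕ), StrictMono φ → P a → P (a ∘ φ))
    (hex : ∀ a, ∃ φ : ℕ → ℕ, StrictMono φ ∧ P (a ∘ φ))
    (s : Finset ι) (z : ℕ → ι → β) :
    ∃ φ : ℕ → ℕ, StrictMono φ ∧ ∀ i ∈ s, P fun l => z (φ l) i := by
  classical
  induction s using Finset.induction_on with
  | empty => exact ⟨id, strictMono_id, by simp⟩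
  | insert a s _ ih =>
    obtain ⟨φ, hφ, hs⟩ := ih
    obtain ⟨ψ, hψ, ha⟩ := hex fun l => z (φ l) a
    refine ⟨φ ∘ ψ, hφ.comp hψ, fun i hi => ?_⟩
    rcases Finset.mem_insert.1 hi with rfl | hi
    · exact ha
    · exact hP _ ψ hψ (hs i hi)

theorem cos_toIcoMod_two_pi (t : ℝ) : cos (toIcoMod two_pi_pos 0 t) = cos t := by
  rw [← self_sub_toIcoDiv_zsmul, zsmul_eq_mul, cos_sub_int_mul_two_pi]

theorem sin_toIcoMod_two_pi (t : ℝ) : sin (toIcoMod two_pi_pos 0 t) = sin t := by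
  rw [← self_sub_toIcoDiv_zsmul, zsmul_eq_mul, sin_sub_int_mul_two_pi]

def toS (p : ℝ × ℝ × ℝ) : S :=
  ⟨(p.1, p.2.1, toIcoMod two_pi_pos 0 p.2.2), toIcoMod_mem_Ico' two_pi_pos p.2.2⟩

theorem toS_val (x : S) : toS x.1 = x := by
  have hθ : toIcoMod two_pi_pos 0 x.1.2.2 = x.1.2.2 :=
    (toIcoMod_eq_self _).2 (by rw [zero_add]; exact x.2)
  exact Subtype.ext (by simp [toS, hθ])

theorem dS_self (x : S) : dS x x = 0 := by simp [dS]

theorem dS_nonneg (x y : S) : 0 ≤ dS x y := sqrt_nonneg _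

theorem continuous_dS_toS (y : S) : Continuous fun q => dS (toS q) y := by
  simp only [dS, toS, cos_toIcoMod_two_pi, sin_toIcoMod_two_pi]
  fun_prop

theorem measurable_dS_left (y : S) : Measurable fun x => dS x y := by
  convert ((continuous_dS_toS y).comp continuous_subtype_val).measurable using 2 with x
  rw [Function.comp_apply, toS_val]

theorem measurableSet_dS_sq_lt (y : S) (c : ℝ) : MeasurableSet {x | dS x y ^ 2 < c} :=
  measurableSet_lt ((measurable_dS_left y).pow_const 2) measurable_const

theorem tendsto_dS_toS {a : ℕ → S} {p : ℝ × ℝ × ℝ} (h : Tendsto (fun l => (a l).1) atTop (𝓝 p)) :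
    Tendsto (fun l => dS (a l) (toS p)) atTop (𝓝 0) := by
  simpa [Function.comp_def, toS_val, dS_self] using
    ((continuous_dS_toS (toS p)).tendsto p).comp h

theorem dist_val_le_dS_add (x y : S) : dist x.1 y.1 ≤ dS x y + 2 * π := by
  have h₁ : |x.1.1 - y.1.1| ≤ dS x y := abs_le_sqrt <| by
    linarith [sq_nonneg (x.1.2.1 - y.1.2.1), sq_nonneg (cos x.1.2.2 - cos y.1.2.2),
      sq_nonneg (sin x.1.2.2 - sin y.1.2.2)]
  have h₂ : |x.1.2.1 - y.1.2.1| ≤ dS x y := abs_le_sqrt <| by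
    linarith [sq_nonneg (x.1.1 - y.1.1), sq_nonneg (cos x.1.2.2 - cos y.1.2.2),
      sq_nonneg (sin x.1.2.2 - sin y.1.2.2)]
  have h₃ : |x.1.2.2 - y.1.2.2| < 2 * π :=
    abs_sub_lt_iff.2 ⟨by linarith [x.2.2, y.2.1], by linarith [x.2.1, y.2.2]⟩
  have := dS_nonneg x y
  simp only [Prod.dist_eq, Real.dist_eq]
  exact max_le (by linarith [pi_pos]) (max_le (by linarith [pi_pos]) (by linarith))

def EscapesOrConverges (a : ℕ → S) : Prop :=
  Tendsto (fun l => ‖(a l).1‖) atTop atTop ∨ ∃ v, Tendsto (fun l => dS (a l) v) atTop (𝓝 0)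

theorem EscapesOrConverges.comp_strictMono {a : ℕ → S} (ha : EscapesOrConverges a) {φ : ℕ → ℕ}
    (hφ : StrictMono φ) : EscapesOrConverges (a ∘ φ) :=
  ha.imp (·.comp hφ.tendsto_atTop) fun ⟨v, hv⟩ => ⟨v, hv.comp hφ.tendsto_atTop⟩

theorem exists_subseq_escapesOrConverges (a : ℕ → S) :
    ∃ φ : ℕ → ℕ, StrictMono φ ∧ EscapesOrConverges (a ∘ φ) := by
  by_cases h : Tendsto (fun l => ‖(a l).1‖) atTop atTop
  · exact ⟨id, strictMono_id, Or.inl h⟩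
  obtain ⟨C, hC⟩ : ∃ C, ∃ᶠ l in atTop, ‖(a l).1‖ < C := by
    simpa [tendsto_atTop, not_eventually, frequently_atTop] using h
  obtain ⟨p, -, φ, hφ, hp⟩ := tendsto_subseq_of_frequently_bounded
    (Metric.isBounded_ball (x := 0) (r := C)) (x := fun l => (a l).1) (by simpa using hC)
  exact ⟨φ, hφ, Or.inr ⟨toS p, tendsto_dS_toS hp⟩⟩

theorem tendsto_measure_dS_sq_lt (ν : Measure S) [IsFiniteMeasure ν] {a : ℕ → S}
    (ha : Tendsto (fun l => ‖(a l).1‖) atTop atTop) (c : ℝ) :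
    Tendsto (fun l => ν {y | dS y (a l) ^ 2 < c}) atTop (𝓝 0) := by
  have hsub : ∀ l, {y | dS y (a l) ^ 2 < c} ⊆ {y | ‖(a l).1‖ - (√c + 2 * π) ≤ ‖y.1‖} := by
    intro l y hy
    have h₁ : dS y (a l) < √c := (lt_sqrt (dS_nonneg _ _)).2 hy
    have h₂ := dist_val_le_dS_add y (a l)
    have h₃ := norm_sub_norm_le (a l).1 y.1
    rw [← dist_eq_norm, dist_comm] at h₃
    show ‖(a l).1‖ - (√c + 2 * π) ≤ ‖y.1‖
    linarith
  refine tendsto_of_tendsto_of_tendsto_of_le_of_le tendsto_const_nhds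
    ((tendsto_measure_setOf_le_atTop ν measurable_subtype_coe.norm).comp
      (tendsto_atTop_add_const_right _ _ ha)) (fun _ => bot_le) fun l => measure_mono (hsub l)

section Reset

variable {κ : S → Measure S} (hκ : Measurable κ) (c' : ℕ → ℝ) {z w : ℕ → S} {j : ℕ}
include hκ

/-- Outside `{d(·, z_j)² < c'_j}` the cost-to-go from stage `j` is already `c'_j`, the most it
can be; earlier stages only propagate the excess through the kernel. -/
theorem Jaux_le_add_stepProb (hzw : ∀ i < j, w i = z i) (m : ℕ) :
    ∀ n i, i + n = j → ∀ x, Jaux κ c' w (m + n + 1) i x ≤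
      Jaux κ c' z (m + n + 1) i x + ENNReal.ofReal (c' j) *
        stepProb κ {y | dS y (z j) ^ 2 < c' j} n x
  | 0, i, hij, x => by
    obtain rfl : i = j := hij
    by_cases hx : dS x (z i) ^ 2 < c' i
    · simp only [stepProb, indicator_of_mem (show x ∈ {y | dS y (z i) ^ 2 < c' i} from hx),
        Pi.one_apply, mul_one]
      exact (min_le_right _ _).trans le_add_self
    · refine (min_le_right _ _).trans (le_add_right (le_min ?_ le_rfl))
      exact le_add_right (ENNReal.ofReal_le_ofReal (not_lt.1 hx))
  | n + 1, i, hij, x => by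
    have hB := measurableSet_dS_sq_lt (z j) (c' j)
    have hint : ∫⁻ y, Jaux κ c' w (m + n + 1) (i + 1) y ∂(κ x) ≤
        ∫⁻ y, Jaux κ c' z (m + n + 1) (i + 1) y ∂(κ x) +
          ENNReal.ofReal (c' j) * stepProb κ {y | dS y (z j) ^ 2 < c' j} (n + 1) x := by
      calc _ ≤ ∫⁻ y, (Jaux κ c' z (m + n + 1) (i + 1) y + ENNReal.ofReal (c' j) *
              stepProb κ {y | dS y (z j) ^ 2 < c' j} n y) ∂(κ x) :=
            lintegral_mono fun y => Jaux_le_add_stepProb hzw m n (i + 1) (by omega) y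
        _ = _ := by
          rw [lintegral_add_right _ ((measurable_stepProb hκ hB n).const_mul _),
            lintegral_const_mul _ (measurable_stepProb hκ hB n)]
          rfl
    calc Jaux κ c' w (m + (n + 1) + 1) i x
        ≤ min (ENNReal.ofReal (dS x (z i) ^ 2) + ∫⁻ y, Jaux κ c' z (m + n + 1) (i + 1) y ∂(κ x)
            + ENNReal.ofReal (c' j) * stepProb κ {y | dS y (z j) ^ 2 < c' j} (n + 1) x)
            (ENNReal.ofReal (c' i)) := by
          rw [Jaux, hzw i (by omega), add_assoc]
          gcongr
          exact hint
      _ ≤ _ := (min_le_min_left _ le_self_add).trans_eq (min_add_add_right _ _ _)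

theorem Gtot_le_add_measure {k N : ℕ} (hkj : k ≤ j) (hjN : j ≤ N) (hzw : ∀ i < j, w i = z i) :
    Gtot κ c' k N w ≤ Gtot κ c' k N z + ENNReal.ofReal (c' j) *
      ((fun ν : Measure S => ν.bind κ)^[j - k] (κ origin)) {y | dS y (z j) ^ 2 < c' j} := by
  have hB := measurableSet_dS_sq_lt (z j) (c' j)
  have hstages : N + 1 - k = N - j + (j - k) + 1 := by omega
  simp only [Gtot, Gj, JJ, hstages]
  calc _ ≤ ∫⁻ x, (Jaux κ c' z (N - j + (j - k) + 1) k x + ENNReal.ofReal (c' j) *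
          stepProb κ {y | dS y (z j) ^ 2 < c' j} (j - k) x) ∂(κ origin) :=
        lintegral_mono fun x => Jaux_le_add_stepProb hκ c' hzw (N - j) (j - k) k (by omega) x
    _ = _ := by
      rw [lintegral_add_right _ ((measurable_stepProb hκ hB _).const_mul _),
        lintegral_const_mul _ (measurable_stepProb hκ hB _), lintegral_stepProb hκ hB]

end Reset

def DTendsto (k N : ℕ) (u : ℕ → ℕ → S) (v : ℕ → S) : Prop :=
  ∀ j, k ≤ j → j ≤ N → Tendsto (fun n => dS (u n j) (v j)) atTop (𝓝 0)

theorem DTendsto.exists_subseq_of_forall_mem_insert_range {k N : ℕ} {w : ℕ → ℕ → S}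
    {v : ℕ → S} (hw : DTendsto k N w v) {u : ℕ → ℕ → S} (hu : ∀ n, u n ∈ insert v (range w)) :
    ∃ y ∈ insert v (range w), ∃ φ : ℕ → ℕ, StrictMono φ ∧ DTendsto k N (u ∘ φ) y := by
  by_cases hfreq : ∃ y ∈ insert v (range w), ∃ᶠ n in atTop, u n = y
  · obtain ⟨y, hy, hfreq⟩ := hfreq
    obtain ⟨φ, hφ, huφ⟩ := extraction_of_frequently_atTop hfreq
    exact ⟨y, hy, φ, hφ, fun j _ _ => by simp [huφ, dS_self]⟩
  -- every point of the set is hit only finitely often, so `u` eventually follows the tail of `w`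
  simp only [not_exists, not_and, not_frequently] at hfreq
  refine ⟨v, mem_insert _ _, id, strictMono_id, fun j hkj hjN => ?_⟩
  refine tendsto_order.2 ⟨fun e he => .of_forall fun n => he.trans_le (dS_nonneg _ _),
    fun ε hε => ?_⟩
  obtain ⟨L, hL⟩ := eventually_atTop.1 ((hw j hkj hjN).eventually (gt_mem_nhds hε))
  have hfar : ∀ᶠ n in atTop, ∀ m ∈ Iio L, u n ≠ w m :=
    (eventually_all_finite (finite_Iio L)).2 fun m _ =>
      hfreq _ (mem_insert_of_mem _ (mem_range_self m))
  filter_upwards [hfar] with n hn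
  rcases hu n with hv | ⟨m, hm⟩
  · simpa [hv, dS_self] using hε
  · simpa [← hm] using hL m (not_lt.1 fun hmL => hn m hmL hm.symm)

theorem exists_dTendsto_Gtot_le_add {κ : S → Measure S} (hκ : IsMarkov κ) (c' : ℕ → ℝ)
    {k N : ℕ} {z : ℕ → ℕ → S} (hz : ∀ i ∈ Finset.Icc k N, EscapesOrConverges fun l => z l i) :
    ∃ w v, DTendsto k N w v ∧ ∃ e : ℕ → ℝ≥0∞, Tendsto e atTop (𝓝 0) ∧
      ∀ l, Gtot κ c' k N (w l) ≤ Gtot κ c' k N (z l) + e l := by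
  classical
  have : Nonempty S := ⟨origin⟩
  by_cases hesc : ∃ j, j ∈ Finset.Icc k N ∧ Tendsto (fun l => ‖(z l j).1‖) atTop atTop
  swap
  · push Not at hesc
    choose! v hv using fun i hi => (hz i hi).resolve_left (hesc i hi)
    exact ⟨z, v, fun i hki hiN => hv i (Finset.mem_Icc.2 ⟨hki, hiN⟩), 0, tendsto_const_nhds,
      fun l => le_self_add⟩
  obtain ⟨hj, hjesc⟩ := Nat.find_spec hesc
  set j := Nat.find hesc
  obtain ⟨hkj, hjN⟩ := Finset.mem_Icc.1 hj
  choose! v hv using fun i (hi : i ∈ Finset.Icc k N) (hij : i < j) =>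
    (hz i hi).resolve_left fun h => Nat.find_min hesc hij ⟨hi, h⟩
  have hκm : Measurable κ := Measure.measurable_of_measurable_coe κ hκ.2
  have := hκ.1 origin
  have := isProbabilityMeasure_iterate_bind hκm hκ.1 (j - k) (κ origin)
  refine ⟨fun l i => if i < j then z l i else origin, fun i => if i < j then v i else origin,
    fun i hki hiN => ?_, _, ?_, fun l => Gtot_le_add_measure hκm c' hkj hjN fun i hi => if_pos hi⟩
  · by_cases hij : i < j
    · simpa [hij] using hv i (Finset.mem_Icc.2 ⟨hki, hiN⟩) hij
    · simp [hij, dS_self]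
  · simpa using ENNReal.Tendsto.const_mul (tendsto_measure_dS_sq_lt _ hjesc (c' j))
      (Or.inr ENNReal.ofReal_ne_top)

/-- Compactness of `K ⊆ S^(N−k+1)` is expressed sequentially, for the product metric on the
components `k, …, N` of `ℕ → S`. -/
theorem minimizer_in_compact_set_general (κ : S → Measure S) (hκ : IsMarkov κ)
    (k N : ℕ) (c' : ℕ → ℝ) :
    ∃ K : Set (ℕ → S),
      (∀ u : ℕ → (ℕ → S), (∀ n, u n ∈ K) →
        ∃ v ∈ K, ∃ φ : ℕ → ℕ, StrictMono φ ∧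
          ∀ j, k ≤ j → j ≤ N → ∀ ε : ℝ, 0 < ε →
            ∃ M : ℕ, ∀ n, M ≤ n → dS (u (φ n) j) (v j) < ε) ∧
      ∀ xhat : ℕ → S,
        (⨅ (y : ℕ → S) (_ : y ∈ K), Gtot κ c' k N y) ≤ Gtot κ c' k N xhat := by
  obtain ⟨g, -, hg, hgG⟩ :=
    exists_seq_tendsto_sInf (S := range (Gtot κ c' k N)) ⟨_, mem_range_self fun _ => origin⟩
      (OrderBot.bddBelow _)
  choose z hz using hgG
  obtain ⟨φ, hφ, hzφ⟩ := exists_strictMono_forall_finset EscapesOrConverges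
    (fun _ _ hφ ha => ha.comp_strictMono hφ) exists_subseq_escapesOrConverges (Finset.Icc k N) z
  obtain ⟨w, v, hwv, e, he, hwe⟩ := exists_dTendsto_Gtot_le_add hκ c' hzφ
  refine ⟨insert v (range w), fun u hu => ?_, fun xhat => ?_⟩
  · obtain ⟨y, hy, ψ, hψ, hconv⟩ := hwv.exists_subseq_of_forall_mem_insert_range hu
    exact ⟨y, hy, ψ, hψ, fun j hkj hjN ε hε =>
      eventually_atTop.1 ((hconv j hkj hjN).eventually (gt_mem_nhds hε))⟩
  have hlim : Tendsto (fun l => Gtot κ c' k N (z (φ l)) + e l) atTop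
      (𝓝 (sInf (range (Gtot κ c' k N)) + 0)) := by
    simpa only [hz, Function.comp_apply] using (hg.comp hφ.tendsto_atTop).add he
  refine (ge_of_tendsto' hlim fun l => ?_).trans ?_
  · exact (iInf₂_le (w l) (mem_insert_of_mem _ (mem_range_self l))).trans (hwe l)
  · rw [add_zero, sInf_range]
    exact iInf_le _ xhat

/-- Under Assumption 1 and Hypothesis (H), there is a compact set `K` of estimate
tuples (compactness expressed sequentially for the product metric on the
components `k, …, N`) such that the infimum of `G` over `K` is at most `G(x̂_{k:N})`
for every tuple of estimates. -/
theorem minimizer_in_compact_set (κ : S → Measure S) (hκ : IsMarkov κ)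
    (hA : Assumption1 κ)
    (k N : ℕ) (hkN : k ≤ N) (c' : ℕ → ℝ) (hc' : ∀ j, k ≤ j → j ≤ N → 0 < c' j)
    (hH : HypH κ c' k N) :
    ∃ K : Set (ℕ → S),
      (∀ u : ℕ → (ℕ → S), (∀ n, u n ∈ K) →
        ∃ v ∈ K, ∃ φ : ℕ → ℕ, StrictMono φ ∧
          ∀ j, k ≤ j → j ≤ N → ∀ ε : ℝ, 0 < ε →
            ∃ M : ℕ, ∀ n, M ≤ n → dS (u (φ n) j) (v j) < ε) ∧
      ∀ xhat : ℕ → S,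
        (⨅ (y : ℕ → S) (_ : y ∈ K), Gtot κ c' k N y) ≤ Gtot κ c' k N xhat :=
  minimizer_in_compact_set_general κ hκ k N c'

end
end

section
/- Suppose κ satisfies Assumption 1 and Hypothesis (H) holds. Then there exist a randomized policy f*_{k:N} and estimates x̂*_{k:N} ∈ S^(N−k+1) that are jointly optimal: C(f*_{k:N}, x̂*_{k:N}) ≤ C(f_{k:N}, x̂_{k:N}) for every randomized policy f_{k:N} and every x̂_{k:N} ∈ S^(N−k+1). Moreover, x̂*_{k:N} can be taken to be a global minimizer of G over S^(N−k+1), and then C(f*_{k:N}, x̂*_{k:N}) = G(x̂*_{k:N}). -/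
open MeasureTheory Filter
open scoped ENNReal NNReal Topology

noncomputable section

/-!
For fixed estimates, the policy that does not transmit exactly on `D̄_j` has cost `G`, and every
policy costs at least `G`; so it suffices that `G` attains its minimum over the estimates.

For this, let only the stages in a set `U` be allowed not to transmit (the others always pay
`c'_j`), and induct on `U`. If dropping some stage from `U` does not raise the infimum, a
minimizer for the smaller set is also one for `U`. Otherwise no near-minimizer can move an
estimate `x̂_j` far away: the chain then rarely comes within `√c'_j` of `x̂_j`, so dropping
stage `j` would cost almost nothing. Minimizing sequences are therefore bounded, and a limit point
of one is a minimizer because the cost depends continuously on the estimates.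
-/

namespace EventTriggered

lemma min_le_mul_add_tsub_mul {p : ℝ≥0∞} (hp : p ≤ 1) (a b : ℝ≥0∞) :
    min a b ≤ p * a + (1 - p) * b :=
  calc min a b = p * min a b + (1 - p) * min a b := by
        rw [← add_mul, add_tsub_cancel_of_le hp, one_mul]
    _ ≤ p * a + (1 - p) * b := by gcongr; exacts [min_le_left _ _, min_le_right _ _]

lemma min_le_min_add {a b c e : ℝ≥0∞} (h : b < c → a ≤ b + e) : min a c ≤ min b c + e := by
  rcases lt_or_ge b c with hbc | hcb
  · rw [min_eq_left hbc.le]; exact (min_le_left _ _).trans (h hbc)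
  · rw [min_eq_right hcb]; exact (min_le_right _ _).trans le_self_add

lemma lintegral_add_const_of_isProbabilityMeasure {α : Type*} [MeasurableSpace α] (μ : Measure α)
    [IsProbabilityMeasure μ] (f : α → ℝ≥0∞) (a : ℝ≥0∞) : ∫⁻ y, f y + a ∂μ = ∫⁻ y, f y ∂μ + a := by
  rw [lintegral_add_right _ measurable_const, lintegral_const, measure_univ, mul_one]

def dR (a b : ℝ × ℝ × ℝ) : ℝ :=
  √((a.1 - b.1) ^ 2 + (a.2.1 - b.2.1) ^ 2 + 2 * (Real.cos a.2.2 - Real.cos b.2.2) ^ 2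
    + 2 * (Real.sin a.2.2 - Real.sin b.2.2) ^ 2)

lemma dS_eq_dR (x y : S) : dS x y = dR x.1 y.1 := rfl

lemma continuous_dR_right (a : ℝ × ℝ × ℝ) : Continuous (dR a) := by
  unfold dR; fun_prop

lemma dR_self (a : ℝ × ℝ × ℝ) : dR a a = 0 := by simp [dR]

def toEuclidean (x : S) : EuclideanSpace ℝ (Fin 4) :=
  WithLp.toLp 2 ![x.1.1, x.1.2.1, √2 * Real.cos x.1.2.2, √2 * Real.sin x.1.2.2]

lemma dS_eq_dist (x y : S) : dS x y = dist (toEuclidean x) (toEuclidean y) := by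
  rw [EuclideanSpace.dist_eq, dS, Fin.sum_univ_four]
  congr 1
  simp only [toEuclidean, PiLp.toLp_apply, Matrix.cons_val_zero, Matrix.cons_val_one,
    Matrix.cons_val_two, Matrix.cons_val_three, Matrix.head_cons, Matrix.tail_cons,
    Real.dist_eq, sq_abs]
  have h2 : √2 ^ 2 = 2 := Real.sq_sqrt (by norm_num)
  linear_combination (-((Real.cos x.1.2.2 - Real.cos y.1.2.2) ^ 2
    + (Real.sin x.1.2.2 - Real.sin y.1.2.2) ^ 2)) * h2

lemma dS_nonneg (x y : S) : 0 ≤ dS x y := Real.sqrt_nonneg _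

lemma dS_self (x : S) : dS x x = 0 := dR_self _

lemma dS_comm (x y : S) : dS x y = dS y x := by rw [dS_eq_dist, dS_eq_dist, dist_comm]

lemma dS_triangle (x y z : S) : dS x z ≤ dS x y + dS y z := by
  simp only [dS_eq_dist]; exact dist_triangle _ _ _

lemma continuous_dS_left (y : S) : Continuous fun x => dS x y := by
  unfold dS; fun_prop

lemma measurableSet_dS_lt (y : S) (r : ℝ) : MeasurableSet {x | dS x y < r} :=
  measurableSet_lt (continuous_dS_left y).measurable measurable_const

lemma abs_fst_le_dS_origin (x : S) : |x.1.1| ≤ dS origin x :=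
  Real.abs_le_sqrt (by
    simp only [origin]
    nlinarith [sq_nonneg x.1.2.1, sq_nonneg (1 - Real.cos x.1.2.2), sq_nonneg (Real.sin x.1.2.2)])

lemma abs_snd_le_dS_origin (x : S) : |x.1.2.1| ≤ dS origin x :=
  Real.abs_le_sqrt (by
    simp only [origin]
    nlinarith [sq_nonneg x.1.1, sq_nonneg (1 - Real.cos x.1.2.2), sq_nonneg (Real.sin x.1.2.2)])

def wrap (a : ℝ × ℝ × ℝ) : S :=
  ⟨(a.1, a.2.1, toIcoMod Real.two_pi_pos 0 a.2.2),
    by simpa using toIcoMod_mem_Ico' Real.two_pi_pos a.2.2⟩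

lemma dS_wrap (a : ℝ × ℝ × ℝ) (y : S) : dS (wrap a) y = dR a y.1 := by
  have hθ : ∃ n : ℤ, toIcoMod Real.two_pi_pos 0 a.2.2 = a.2.2 - n * (2 * Real.pi) :=
    ⟨toIcoDiv Real.two_pi_pos 0 a.2.2, by rw [toIcoMod, zsmul_eq_mul]⟩
  obtain ⟨n, hn⟩ := hθ
  simp only [dS_eq_dR, dR, wrap, hn, Real.cos_sub_int_mul_two_pi, Real.sin_sub_int_mul_two_pi]

lemma exists_subseq_tendsto_dS {x : ℕ → ℕ → S} {R : ℕ → ℝ}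
    (hx : ∀ᶠ l in atTop, ∀ j, dS origin (x l j) ≤ R j) :
    ∃ (y : ℕ → S) (φ : ℕ → ℕ), StrictMono φ ∧
      ∀ j, Tendsto (fun l => dS (y j) (x (φ l) j)) atTop (𝓝 0) := by
  set box : ℕ → Set (ℝ × ℝ × ℝ) := fun j => Set.Icc (-R j, -R j, 0) (R j, R j, 2 * Real.pi)
  have hbox : ∀ l, (∀ j, dS origin (x l j) ≤ R j) → (fun j => (x l j).1) ∈ Set.univ.pi box := by
    intro l hl j _
    have h1 := abs_le.1 ((abs_fst_le_dS_origin (x l j)).trans (hl j))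
    have h2 := abs_le.1 ((abs_snd_le_dS_origin (x l j)).trans (hl j))
    have h3 := (x l j).2
    exact ⟨⟨h1.1, h2.1, h3.1⟩, ⟨h1.2, h2.2, h3.2.le⟩⟩
  obtain ⟨w, -, φ, hφ, hw⟩ :=
    (isCompact_univ_pi fun j => isCompact_Icc).tendsto_subseq' (hx.mono hbox).frequently
  refine ⟨fun j => wrap (w j), φ, hφ, fun j => ?_⟩
  simp only [dS_wrap]
  have h := ((continuous_dR_right (w j)).tendsto (w j)).comp
    (((continuous_apply j).tendsto w).comp hw)
  rwa [dR_self] at h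

variable {κ : S → Measure S} {c' : ℕ → ℝ} {k N : ℕ}

lemma _root_.IsMarkov.measurable (hκ : IsMarkov κ) : Measurable κ :=
  Measure.measurable_of_measurable_coe κ hκ.2

lemma _root_.IsMarkov.measurable_lintegral (hκ : IsMarkov κ) {f : S → ℝ≥0∞} (hf : Measurable f) :
    Measurable fun x => ∫⁻ y, f y ∂κ x :=
  (Measure.measurable_lintegral hf).comp hκ.measurable

lemma measurable_ofReal_dS_sq (y : S) : Measurable fun x => ENNReal.ofReal (dS x y ^ 2) :=
  ENNReal.measurable_ofReal.comp ((continuous_dS_left y).pow 2).measurable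

lemma measurable_Jaux (hκ : IsMarkov κ) (xhat : ℕ → S) (m j : ℕ) :
    Measurable (Jaux κ c' xhat m j) := by
  induction m generalizing j with
  | zero => exact measurable_const
  | succ m ih =>
    exact ((measurable_ofReal_dS_sq _).add (hκ.measurable_lintegral (ih _))).min measurable_const

lemma measurableSet_Dbar (hκ : IsMarkov κ) (xhat : ℕ → S) (j : ℕ) :
    MeasurableSet (Dbar κ c' N xhat j) :=
  measurableSet_le ((measurable_ofReal_dS_sq _).add
    (hκ.measurable_lintegral (measurable_Jaux hκ xhat _ _))) measurable_const

def thresholdPolicy (κ : S → Measure S) (c' : ℕ → ℝ) (N : ℕ) (xhat : ℕ → S) :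
    ℕ → S → ℝ≥0∞ :=
  fun j => (Dbar κ c' N xhat j).indicator 1

lemma isPolicy_thresholdPolicy (hκ : IsMarkov κ) (xhat : ℕ → S) :
    IsPolicy k N (thresholdPolicy κ c' N xhat) :=
  fun j _ _ => ⟨measurable_one.indicator (measurableSet_Dbar hκ xhat j),
    fun x => Set.indicator_le_self _ _ x⟩

lemma Jaux_le_Vaux {f : ℕ → S → ℝ≥0∞} (hf : IsPolicy k N f) (xhat : ℕ → S) (m : ℕ) :
    ∀ j x, N + 1 - j = m → k ≤ j → Jaux κ c' xhat m j x ≤ Vaux κ c' xhat f m j x := by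
  induction m with
  | zero => exact fun _ _ _ _ => le_rfl
  | succ m ih =>
    intro j x hm hkj
    calc Jaux κ c' xhat (m + 1) j x
        = min (ENNReal.ofReal (dS x (xhat j) ^ 2) + ∫⁻ y, Jaux κ c' xhat m (j + 1) y ∂κ x)
            (ENNReal.ofReal (c' j)) := rfl
      _ ≤ min (ENNReal.ofReal (dS x (xhat j) ^ 2) + ∫⁻ y, Vaux κ c' xhat f m (j + 1) y ∂κ x)
            (ENNReal.ofReal (c' j)) := by
          gcongr with y
          exact ih (j + 1) y (by omega) (by omega)
      _ ≤ Vaux κ c' xhat f (m + 1) j x :=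
          min_le_mul_add_tsub_mul ((hf j hkj (by omega)).2 x) _ _

lemma Vaux_thresholdPolicy (xhat : ℕ → S) (m : ℕ) :
    ∀ j x, N + 1 - j = m →
      Vaux κ c' xhat (thresholdPolicy κ c' N xhat) m j x = Jaux κ c' xhat m j x := by
  induction m with
  | zero => exact fun _ _ _ => rfl
  | succ m ih =>
    intro j x hm
    have hJJ : JJ κ c' N xhat (j + 1) = Jaux κ c' xhat m (j + 1) := by
      unfold JJ; rw [show N + 1 - (j + 1) = m by omega]
    have hV : ∀ y, Vaux κ c' xhat (thresholdPolicy κ c' N xhat) m (j + 1) y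
        = Jaux κ c' xhat m (j + 1) y := fun y => ih (j + 1) y (by omega)
    simp only [Vaux, Jaux, hV, thresholdPolicy]
    by_cases hx : x ∈ Dbar κ c' N xhat j
    · have hx' := hx
      simp only [Dbar, Set.mem_ofPred_eq, hJJ] at hx'
      simp [hx, min_eq_left hx']
    · have hx' := hx
      simp only [Dbar, Set.mem_ofPred_eq, hJJ, not_le] at hx'
      simp [hx, min_eq_right hx'.le]

lemma Gtot_le_Cost {f : ℕ → S → ℝ≥0∞} (hf : IsPolicy k N f) (xhat : ℕ → S) :
    Gtot κ c' k N xhat ≤ Cost κ c' k N xhat f :=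
  lintegral_mono fun y => Jaux_le_Vaux hf xhat _ k y rfl le_rfl

lemma Cost_thresholdPolicy (xhat : ℕ → S) :
    Cost κ c' k N xhat (thresholdPolicy κ c' N xhat) = Gtot κ c' k N xhat :=
  lintegral_congr fun y => Vaux_thresholdPolicy xhat _ k y rfl

/-- The value recursion `Jaux` in which only the stages in `U` may decide not to transmit. -/
def Jact (κ : S → Measure S) (c' : ℕ → ℝ) (U : Finset ℕ) (xhat : ℕ → S) :
    ℕ → ℕ → S → ℝ≥0∞
  | 0, _, _ => 0
  | m + 1, j, x =>
      if j ∈ U then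
        min (ENNReal.ofReal (dS x (xhat j) ^ 2) + ∫⁻ y, Jact κ c' U xhat m (j + 1) y ∂κ x)
          (ENNReal.ofReal (c' j))
      else ENNReal.ofReal (c' j)

def Gact (κ : S → Measure S) (c' : ℕ → ℝ) (k N : ℕ) (U : Finset ℕ) (xhat : ℕ → S) : ℝ≥0∞ :=
  ∫⁻ y, Jact κ c' U xhat (N + 1 - k) k y ∂κ origin

lemma Jact_eq_Jaux {U : Finset ℕ} (xhat : ℕ → S) {m j : ℕ}
    (hU : ∀ i, j ≤ i → i < j + m → i ∈ U) (x : S) :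
    Jact κ c' U xhat m j x = Jaux κ c' xhat m j x := by
  induction m generalizing j x with
  | zero => rfl
  | succ m ih =>
    have hJ : ∀ y, Jact κ c' U xhat m (j + 1) y = Jaux κ c' xhat m (j + 1) y :=
      ih (fun i hi hi' => hU i (by omega) (by omega))
    simp only [Jact, Jaux, if_pos (hU j le_rfl (by omega)), hJ]

lemma Gtot_eq_Gact (xhat : ℕ → S) :
    Gtot κ c' k N xhat = Gact κ c' k N (Finset.Icc k N) xhat :=
  lintegral_congr fun y =>
    (Jact_eq_Jaux xhat (fun i hi hi' => Finset.mem_Icc.2 ⟨hi, by omega⟩) y).symm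

lemma Jact_le_ofReal (U : Finset ℕ) (xhat : ℕ → S) (m j : ℕ) (x : S) :
    Jact κ c' U xhat m j x ≤ ENNReal.ofReal (c' j) := by
  cases m with
  | zero => exact zero_le
  | succ m =>
    simp only [Jact]
    split_ifs
    exacts [min_le_right _ _, le_rfl]

lemma Gact_le_ofReal (hκ : IsMarkov κ) (U : Finset ℕ) (xhat : ℕ → S) :
    Gact κ c' k N U xhat ≤ ENNReal.ofReal (c' k) := by
  have := hκ.1 origin
  calc Gact κ c' k N U xhat ≤ ∫⁻ _, ENNReal.ofReal (c' k) ∂κ origin :=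
        lintegral_mono fun y => Jact_le_ofReal U xhat _ k y
    _ = ENNReal.ofReal (c' k) := by rw [lintegral_const, measure_univ, mul_one]

lemma Jact_anti {U V : Finset ℕ} (hUV : U ⊆ V) (xhat : ℕ → S) (m j : ℕ) (x : S) :
    Jact κ c' V xhat m j x ≤ Jact κ c' U xhat m j x := by
  induction m generalizing j x with
  | zero => exact le_rfl
  | succ m ih =>
    by_cases hjU : j ∈ U
    · simp only [Jact, if_pos hjU, if_pos (hUV hjU)]
      gcongr with y
      exact ih _ y
    · simp only [Jact, if_neg hjU]
      split_ifs
      exacts [min_le_right _ _, le_rfl]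

lemma Gact_anti {U V : Finset ℕ} (hUV : U ⊆ V) (xhat : ℕ → S) :
    Gact κ c' k N V xhat ≤ Gact κ c' k N U xhat :=
  lintegral_mono fun y => Jact_anti hUV xhat _ k y

/-- How much `d(x, a)²` can exceed `d(x, b)²` when `d(a, b) = d` and `d(x, b)² < c`. -/
def sqDistModulus (c d : ℝ) : ℝ := (2 * √c + d) * d

lemma sq_le_sq_add_sqDistModulus {a b c d : ℝ} (ha : 0 ≤ a) (hb : 0 ≤ b) (hd : 0 ≤ d)
    (hab : a ≤ b + d) (hbc : b ^ 2 < c) : a ^ 2 ≤ b ^ 2 + sqDistModulus c d := by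
  have hb' : b < √c := (Real.lt_sqrt hb).2 hbc
  unfold sqDistModulus
  nlinarith

lemma ofReal_dS_sq_le_add {x a b : S} {c : ℝ} (hc : dS x b ^ 2 < c) :
    ENNReal.ofReal (dS x a ^ 2)
      ≤ ENNReal.ofReal (dS x b ^ 2) + ENNReal.ofReal (sqDistModulus c (dS a b)) := by
  have htri : dS x a ≤ dS x b + dS a b := dS_comm b a ▸ dS_triangle x b a
  have hd := dS_nonneg a b
  rw [← ENNReal.ofReal_add (sq_nonneg _) (by unfold sqDistModulus; positivity)]
  exact ENNReal.ofReal_le_ofReal <|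
    sq_le_sq_add_sqDistModulus (dS_nonneg _ _) (dS_nonneg _ _) (dS_nonneg _ _) htri hc

lemma Jact_le_add_sum (hκ : IsMarkov κ) (U : Finset ℕ) (xhat yhat : ℕ → S) (m j : ℕ) (x : S) :
    Jact κ c' U xhat m j x ≤ Jact κ c' U yhat m j x
      + ∑ i ∈ U with j ≤ i, ENNReal.ofReal (sqDistModulus (c' i) (dS (xhat i) (yhat i))) := by
  induction m generalizing j x with
  | zero => exact le_add_right le_rfl
  | succ m ih =>
    set w : ℕ → ℝ≥0∞ := fun i => ENNReal.ofReal (sqDistModulus (c' i) (dS (xhat i) (yhat i)))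
    by_cases hjU : j ∈ U
    · have hsum : ∑ i ∈ U with j ≤ i, w i = w j + ∑ i ∈ U with j + 1 ≤ i, w i := by
        rw [← Finset.sum_insert (by simp)]
        congr 1
        ext i
        simp only [Finset.mem_filter, Finset.mem_insert]
        grind
      have := hκ.1 x
      simp only [Jact, if_pos hjU, hsum]
      refine min_le_min_add fun hlt => ?_
      have hdy : dS x (yhat j) ^ 2 < c' j :=
        (ENNReal.ofReal_lt_ofReal_iff'.1 (le_self_add.trans_lt hlt)).1
      calc ENNReal.ofReal (dS x (xhat j) ^ 2) + ∫⁻ y, Jact κ c' U xhat m (j + 1) y ∂κ x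
          ≤ (ENNReal.ofReal (dS x (yhat j) ^ 2) + w j)
            + ∫⁻ y, Jact κ c' U yhat m (j + 1) y + ∑ i ∈ U with j + 1 ≤ i, w i ∂κ x := by
            gcongr with y
            · exact ofReal_dS_sq_le_add hdy
            · exact ih (j + 1) y
        _ = _ := by
            rw [lintegral_add_const_of_isProbabilityMeasure]
            exact add_add_add_comm _ _ _ _
    · simp only [Jact, if_neg hjU]
      exact le_self_add

lemma Gact_le_add_sum (hκ : IsMarkov κ) (U : Finset ℕ) (xhat yhat : ℕ → S) :
    Gact κ c' k N U xhat ≤ Gact κ c' k N U yhat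
      + ∑ i ∈ U, ENNReal.ofReal (sqDistModulus (c' i) (dS (xhat i) (yhat i))) := by
  have := hκ.1 origin
  rw [Gact, Gact, ← lintegral_add_const_of_isProbabilityMeasure]
  refine lintegral_mono fun y => (Jact_le_add_sum hκ U xhat yhat _ k y).trans ?_
  gcongr
  exact Finset.filter_subset _ _

lemma Gact_congr (hκ : IsMarkov κ) {U : Finset ℕ} {xhat yhat : ℕ → S}
    (h : ∀ i ∈ U, xhat i = yhat i) : Gact κ c' k N U xhat = Gact κ c' k N U yhat := by
  have hzero : ∀ a b : ℕ → S, (∀ i ∈ U, a i = b i) →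
      ∑ i ∈ U, ENNReal.ofReal (sqDistModulus (c' i) (dS (a i) (b i))) = 0 :=
    fun a b hab => Finset.sum_eq_zero fun i hi => by simp [hab i hi, dS_self, sqDistModulus]
  apply le_antisymm
  · simpa [hzero xhat yhat h] using Gact_le_add_sum (c' := c') (k := k) (N := N) hκ U xhat yhat
  · simpa [hzero yhat xhat fun i hi => (h i hi).symm] using
      Gact_le_add_sum (c' := c') (k := k) (N := N) hκ U yhat xhat

/-- Expected value, from stage `j` on, of paying `c' j₀` at stage `j₀` when the state lies within
`√(c' j₀)` of `b`: outside that ball, not transmitting with estimate `b` never beats `c' j₀`. -/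
def escapeCost (κ : S → Measure S) (c' : ℕ → ℝ) (j₀ : ℕ) (b : S) : ℕ → ℕ → S → ℝ≥0∞
  | 0, _, _ => 0
  | m + 1, j, x =>
      if j = j₀ then {z | dS z b < √(c' j₀)}.indicator (fun _ => ENNReal.ofReal (c' j₀)) x
      else ∫⁻ y, escapeCost κ c' j₀ b m (j + 1) y ∂κ x

lemma measurable_escapeCost (hκ : IsMarkov κ) (j₀ : ℕ) (b : S) (m j : ℕ) :
    Measurable (escapeCost κ c' j₀ b m j) := by
  induction m generalizing j with
  | zero => exact measurable_const
  | succ m ih =>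
    by_cases hj : j = j₀
    · simp only [escapeCost, if_pos hj]
      exact measurable_const.indicator (measurableSet_dS_lt b _)
    · simp only [escapeCost, if_neg hj]
      exact hκ.measurable_lintegral (ih _)

lemma Jact_erase_le_add (hκ : IsMarkov κ) {U : Finset ℕ} {j₀ : ℕ} (hj₀ : j₀ ∈ U)
    (xhat : ℕ → S) (m j : ℕ) (x : S) :
    Jact κ c' (U.erase j₀) xhat m j x
      ≤ Jact κ c' U xhat m j x + escapeCost κ c' j₀ (xhat j₀) m j x := by
  induction m generalizing j x with
  | zero => exact zero_le
  | succ m ih =>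
    by_cases hj : j = j₀
    · subst hj
      simp only [Jact, escapeCost, Finset.notMem_erase, if_false, if_pos hj₀, if_true]
      by_cases hx : x ∈ {z | dS z (xhat j) < √(c' j)}
      · rw [Set.indicator_of_mem hx]
        exact le_add_self
      · have hcx : c' j ≤ dS x (xhat j) ^ 2 :=
          (Real.sqrt_le_left (dS_nonneg _ _)).1 (not_lt.1 hx)
        rw [Set.indicator_of_notMem hx, add_zero, min_eq_right]
        exact (ENNReal.ofReal_le_ofReal hcx).trans le_self_add
    · simp only [Jact, escapeCost, Finset.mem_erase, hj, if_false, ne_eq, not_false_eq_true,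
        true_and]
      split_ifs
      · refine min_le_min_add fun _ => ?_
        rw [add_assoc, ← lintegral_add_right _ (measurable_escapeCost hκ _ _ _ _)]
        gcongr with y
        exact ih _ y
      · exact le_self_add

lemma lintegral_escapeCost (hκ : IsMarkov κ) (j₀ : ℕ) (b : S) (m : ℕ) :
    ∀ (j : ℕ) (μ : Measure S), j ≤ j₀ → j₀ < j + m →
      ∫⁻ x, escapeCost κ c' j₀ b m j x ∂μ
        = ENNReal.ofReal (c' j₀) * ((Measure.bind · κ)^[j₀ - j] μ) {z | dS z b < √(c' j₀)} := by
  induction m with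
  | zero => intro j μ h h'; omega
  | succ m ih =>
    intro j μ hj hj'
    rcases hj.eq_or_lt with rfl | hlt
    · simp only [escapeCost, if_true, Nat.sub_self, Function.iterate_zero, id]
      rw [lintegral_indicator (measurableSet_dS_lt b _), setLIntegral_const]
    · simp only [escapeCost, if_neg hlt.ne]
      rw [← Measure.lintegral_bind hκ.measurable.aemeasurable
        (measurable_escapeCost hκ _ _ _ _).aemeasurable, ih (j + 1) _ hlt (by omega),
        show j₀ - j = (j₀ - (j + 1)) + 1 by omega, Function.iterate_succ_apply]

lemma isProbabilityMeasure_iterate_bind (hκ : IsMarkov κ) (μ : Measure S)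
    [IsProbabilityMeasure μ] (n : ℕ) : IsProbabilityMeasure ((Measure.bind · κ)^[n] μ) := by
  induction n with
  | zero => assumption
  | succ n ih =>
    rw [Function.iterate_succ_apply']
    exact isProbabilityMeasure_bind hκ.measurable.aemeasurable (ae_of_all _ hκ.1)

lemma Gact_erase_le_add (hκ : IsMarkov κ) {U : Finset ℕ} {j₀ : ℕ} (hj₀ : j₀ ∈ U)
    (hk : k ≤ j₀) (hN : j₀ ≤ N) (xhat : ℕ → S) :
    Gact κ c' k N (U.erase j₀) xhat ≤ Gact κ c' k N U xhat
      + ENNReal.ofReal (c' j₀)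
        * ((Measure.bind · κ)^[j₀ - k] (κ origin)) {z | dS z (xhat j₀) < √(c' j₀)} := by
  rw [Gact, Gact, ← lintegral_escapeCost hκ j₀ (xhat j₀) (N + 1 - k) k _ hk (by omega),
    ← lintegral_add_right _ (measurable_escapeCost hκ _ _ _ _)]
  exact lintegral_mono fun y => Jact_erase_le_add hκ hj₀ xhat _ k y

lemma exists_forall_mul_measure_dS_lt_lt (μ : Measure S) [IsFiniteMeasure μ] {a : ℝ≥0∞}
    (ha : a ≠ ⊤) (r : ℝ) {δ : ℝ≥0∞} (hδ : 0 < δ) :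
    ∃ R : ℝ, ∀ b : S, R < dS origin b → a * μ {z | dS z b < r} < δ := by
  set far : ℕ → Set S := fun n => {z | (n : ℝ) ≤ dS z origin}
  have hfar : Tendsto (fun n => a * μ (far n)) atTop (𝓝 0) := by
    have hanti : Antitone far := fun n n' hn z (hz : (n' : ℝ) ≤ _) =>
      show (n : ℝ) ≤ _ from le_trans (by exact_mod_cast hn) hz
    have hempty : ⋂ n, far n = ∅ :=
      Set.iInter_eq_empty_iff.2 fun z => (exists_nat_gt (dS z origin)).imp fun _ h => not_le.2 h
    have h := tendsto_measure_iInter_atTop (μ := μ) (fun n => (measurableSet_le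
      measurable_const (continuous_dS_left origin).measurable).nullMeasurableSet)
      hanti ⟨0, measure_ne_top _ _⟩
    rw [hempty, measure_empty] at h
    simpa using ENNReal.Tendsto.const_mul h (Or.inr ha)
  obtain ⟨n, hn⟩ := (hfar.eventually (gt_mem_nhds hδ)).exists
  refine ⟨n + r, fun b hb => lt_of_le_of_lt ?_ hn⟩
  gcongr
  intro z hz
  have := dS_triangle origin z b
  simp only [far, Set.mem_ofPred_eq, dS_comm z origin] at hz ⊢
  linarith

lemma exists_bound_of_iInf_lt_iInf_erase (hκ : IsMarkov κ) {U : Finset ℕ}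
    (hU : U ⊆ Finset.Icc k N) {j₀ : ℕ} (hj₀ : j₀ ∈ U)
    (hgap : ⨅ y, Gact κ c' k N U y < ⨅ y, Gact κ c' k N (U.erase j₀) y) :
    ∃ (R : ℝ) (δ : ℝ≥0∞), 0 < δ ∧ ∀ xhat, Gact κ c' k N U xhat < (⨅ y, Gact κ c' k N U y) + δ →
      dS origin (xhat j₀) ≤ R := by
  set m := ⨅ y, Gact κ c' k N U y
  set m' := ⨅ y, Gact κ c' k N (U.erase j₀) y
  set δ := (m' - m) / 2
  have hδ : 0 < δ := ENNReal.half_pos (tsub_pos_of_lt hgap).ne'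
  have := hκ.1 origin
  have := isProbabilityMeasure_iterate_bind hκ (κ origin) (j₀ - k)
  obtain ⟨R, hR⟩ :=
    exists_forall_mul_measure_dS_lt_lt ((Measure.bind · κ)^[j₀ - k] (κ origin))
      ENNReal.ofReal_ne_top (√(c' j₀)) hδ
  refine ⟨R, δ, hδ, fun xhat hx => not_lt.1 fun hfar => lt_irrefl m' ?_⟩
  obtain ⟨hk, hN⟩ := Finset.mem_Icc.1 (hU hj₀)
  calc m' ≤ Gact κ c' k N (U.erase j₀) xhat := iInf_le _ _
    _ ≤ _ := Gact_erase_le_add hκ hj₀ hk hN xhat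
    _ < (m + δ) + δ := ENNReal.add_lt_add hx (hR _ hfar)
    _ = m' := by rw [add_assoc, ENNReal.add_halves, add_tsub_cancel_of_le hgap.le]

lemma continuous_sqDistModulus (c : ℝ) : Continuous (sqDistModulus c) := by
  unfold sqDistModulus; fun_prop

lemma exists_forall_Gact_le_of_tendsto (hκ : IsMarkov κ) {U : Finset ℕ} {xn : ℕ → ℕ → S}
    {R : ℕ → ℝ} (hb : ∀ᶠ l in atTop, ∀ j, dS origin (xn l j) ≤ R j)
    (ht : Tendsto (fun l => Gact κ c' k N U (xn l)) atTop (𝓝 (⨅ y, Gact κ c' k N U y))) :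
    ∃ xstar, ∀ y, Gact κ c' k N U xstar ≤ Gact κ c' k N U y := by
  obtain ⟨xstar, φ, hφ, hconv⟩ := exists_subseq_tendsto_dS hb
  refine ⟨xstar, fun y => le_trans ?_ (iInf_le _ y)⟩
  have hmod : Tendsto (fun l => ∑ i ∈ U,
      ENNReal.ofReal (sqDistModulus (c' i) (dS (xstar i) (xn (φ l) i)))) atTop (𝓝 0) := by
    have h := tendsto_finsetSum U fun i _ => ENNReal.tendsto_ofReal
      (((continuous_sqDistModulus (c' i)).tendsto 0).comp (hconv i))
    simpa [sqDistModulus] using h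
  have h := (ht.comp hφ.tendsto_atTop).add hmod
  rw [add_zero] at h
  exact ge_of_tendsto' h fun l => Gact_le_add_sum hκ U xstar (xn (φ l))

theorem exists_forall_Gact_le (hκ : IsMarkov κ) (U : Finset ℕ) (hU : U ⊆ Finset.Icc k N) :
    ∃ xstar, ∀ y, Gact κ c' k N U xstar ≤ Gact κ c' k N U y := by
  induction U using Finset.strongInduction with
  | H U ih =>
    by_cases hdrop : ∃ j ∈ U, ⨅ y, Gact κ c' k N (U.erase j) y ≤ ⨅ y, Gact κ c' k N U y
    · obtain ⟨j, hj, hle⟩ := hdrop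
      obtain ⟨xstar, hxstar⟩ :=
        ih _ (Finset.erase_ssubset hj) ((Finset.erase_subset _ _).trans hU)
      refine ⟨xstar, fun y => ?_⟩
      calc Gact κ c' k N U xstar ≤ Gact κ c' k N (U.erase j) xstar :=
            Gact_anti (Finset.erase_subset _ _) xstar
        _ ≤ ⨅ y, Gact κ c' k N (U.erase j) y := le_iInf hxstar
        _ ≤ ⨅ y, Gact κ c' k N U y := hle
        _ ≤ Gact κ c' k N U y := iInf_le _ _
    · push Not at hdrop
      choose! R δ hδ hR using fun j hj => exists_bound_of_iInf_lt_iInf_erase hκ hU hj (hdrop j hj)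
      obtain ⟨u, -, hu, hmem⟩ := exists_seq_tendsto_sInf (S := Set.range (Gact κ c' k N U))
        ⟨_, Set.mem_range_self fun _ => origin⟩ (OrderBot.bddBelow _)
      rw [sInf_range] at hu
      choose xh hxh using hmem
      have hinf : ⨅ y, Gact κ c' k N U y ≠ ⊤ := ne_top_of_le_ne_top ENNReal.ofReal_ne_top
        ((iInf_le _ (xh 0)).trans (Gact_le_ofReal hκ U _))
      have hnear : ∀ᶠ l in atTop, ∀ j ∈ U, u l < (⨅ y, Gact κ c' k N U y) + δ j :=
        (Finset.eventually_all _).2 fun j hj =>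
          hu.eventually (gt_mem_nhds (ENNReal.lt_add_right hinf (hδ j hj).ne'))
      set xn : ℕ → ℕ → S := fun l j => if j ∈ U then xh l j else origin
      have hxn : ∀ l, Gact κ c' k N U (xn l) = u l := fun l =>
        (Gact_congr hκ fun i hi => if_pos hi).trans (hxh l)
      refine exists_forall_Gact_le_of_tendsto hκ (xn := xn) (R := fun j => max (R j) 0) ?_
        (by simpa [hxn])
      filter_upwards [hnear] with l hl j
      by_cases hj : j ∈ U
      · simp only [xn, if_pos hj]
        exact (hR j hj (xh l) ((hxh l).symm ▸ hl j hj)).trans (le_max_left _ _)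
      · simp only [xn, if_neg hj, dS_self]
        exact le_max_right _ _

end EventTriggered

theorem exists_jointly_optimal_general (κ : S → Measure S) (hκ : IsMarkov κ)
    (k N : ℕ) (c' : ℕ → ℝ) :
    ∃ (fstar : ℕ → S → ℝ≥0∞) (xstar : ℕ → S),
      IsPolicy k N fstar ∧
      (∀ (f : ℕ → S → ℝ≥0∞) (xhat : ℕ → S), IsPolicy k N f →
        Cost κ c' k N xstar fstar ≤ Cost κ c' k N xhat f) ∧
      (∀ yhat : ℕ → S, Gtot κ c' k N xstar ≤ Gtot κ c' k N yhat) ∧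
      Cost κ c' k N xstar fstar = Gtot κ c' k N xstar := by
  open EventTriggered in
  obtain ⟨xstar, hxstar⟩ := exists_forall_Gact_le (c' := c') hκ (Finset.Icc k N) subset_rfl
  have hmin : ∀ yhat, Gtot κ c' k N xstar ≤ Gtot κ c' k N yhat := by
    simpa only [Gtot_eq_Gact] using hxstar
  refine ⟨thresholdPolicy κ c' N xstar, xstar, isPolicy_thresholdPolicy hκ xstar,
    fun f xhat hf => ?_, hmin, Cost_thresholdPolicy xstar⟩
  rw [Cost_thresholdPolicy]
  exact (hmin xhat).trans (Gtot_le_Cost hf xhat)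

/-- Under Assumption 1 and Hypothesis (H), there exists a jointly optimal pair of
a randomized policy and estimates; the estimates can be taken to be a global
minimizer of `G`, and then the optimal cost equals `G(x̂*_{k:N})`. -/
theorem exists_jointly_optimal (κ : S → Measure S) (hκ : IsMarkov κ)
    (hA : Assumption1 κ)
    (k N : ℕ) (hkN : k ≤ N) (c' : ℕ → ℝ) (hc' : ∀ j, k ≤ j → j ≤ N → 0 < c' j)
    (hH : HypH κ c' k N) :
    ∃ (fstar : ℕ → S → ℝ≥0∞) (xstar : ℕ → S),
      IsPolicy k N fstar ∧
      (∀ (f : ℕ → S → ℝ≥0∞) (xhat : ℕ → S), IsPolicy k N f →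
        Cost κ c' k N xstar fstar ≤ Cost κ c' k N xhat f) ∧
      (∀ yhat : ℕ → S, Gtot κ c' k N xstar ≤ Gtot κ c' k N yhat) ∧
      Cost κ c' k N xstar fstar = Gtot κ c' k N xstar :=
  exists_jointly_optimal_general κ hκ k N c'

end
end
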